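/- arXiv:math/0502269 — 3 statements merged into one kernel-verified Lean document; each statement's English description precedes it below -/
import Mathlib

section
/- Let (W,S) be a Coxeter system and let s,t ∈ S. Then s is conjugate to t in W if and only if there exists a sequence s_1, …, s_n of elements of S such that s_1 = s, s_n = t, and m(s_i, s_{i+1}) is odd for each i ∈ {1, …, n−1}. -/
/-!
An odd braid relation `(st)^(2k+1) = 1` between involutions makes `s` and `t` conjugate, by
`(st)^k`; chaining gives one direction. Conversely, if `T ⊆ S` is closed under odd edges of the
Coxeter graph, sending the simple reflections in `T` to `-1` and the others to `1` respects all
Coxeter relations, so it extends to a character `W → ℤˣ`. Characters are constant on conjugacy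
classes, so `T` is a union of conjugacy classes of simple reflections; taking `T` to be the
odd-chain component of `s` gives the other direction.
-/

open Relation

theorem Relation.reflTransGen_iff_exists_fin_chain {α : Type*} {R : α → α → Prop} {a b : α} :
    ReflTransGen R a b ↔ ∃ (n : ℕ) (f : Fin (n + 1) → α), f 0 = a ∧ f (Fin.last n) = b ∧
      ∀ k : Fin n, R (f k.castSucc) (f k.succ) := by
  constructor
  · intro h
    induction h with
    | refl => exact ⟨0, fun _ => a, rfl, rfl, Fin.elim0⟩
    | @tail _ c _ hbc ih =>
      obtain ⟨n, f, rfl, rfl, hf⟩ := ih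
      refine ⟨n + 1, Fin.snoc f c, by simp [Fin.snoc], Fin.snoc_last .., Fin.lastCases ?_ ?_⟩
      · simpa using hbc
      · intro k
        rw [Fin.succ_castSucc, Fin.snoc_castSucc, Fin.snoc_castSucc]
        exact hf k
  · rintro ⟨n, f, rfl, rfl, hf⟩
    exact Fin.induction .refl (fun k ih => ih.tail (hf k)) (Fin.last n)

theorem isConj_of_mul_self_of_mul_pow_odd {G : Type*} [Group G] {s t : G} (hs : s * s = 1)
    (ht : t * t = 1) {k : ℕ} (h : (s * t) ^ (2 * k + 1) = 1) : IsConj s t := by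
  have hs' : s⁻¹ = s := inv_eq_of_mul_eq_one_right hs
  have ht' : t⁻¹ = t := inv_eq_of_mul_eq_one_right ht
  set x := s * t with hx
  have hflip : SemiconjBy s x⁻¹ x := by
    rw [SemiconjBy, hx, mul_inv_rev, hs', ht', mul_assoc]
  have hpow : x ^ (2 * k) = x⁻¹ := eq_inv_of_mul_eq_one_left (by rw [← pow_succ, h])
  refine isConj_iff.2 ⟨x ^ k, ?_⟩
  calc x ^ k * s * (x ^ k)⁻¹ = x ^ k * (x ^ k * s) := by
        rw [mul_assoc, ← inv_pow, (hflip.pow_right k).eq]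
    _ = x⁻¹ * s := by rw [← mul_assoc, ← pow_add, ← two_mul, hpow]
    _ = t := by rw [hx, mul_inv_rev, hs', ht', mul_assoc, hs, mul_one]

theorem CoxeterMatrix.isLiftable_of_odd_imp_eq {B G : Type*} [CommMonoid G] {M : CoxeterMatrix B}
    {g : B → G} (hsq : ∀ b, g b * g b = 1) (hodd : ∀ a b, Odd (M a b) → g a = g b) :
    M.IsLiftable g := by
  intro a b
  rcases Nat.even_or_odd (M a b) with ⟨m, hm⟩ | hab
  · rw [hm, ← two_mul, pow_mul, sq, mul_mul_mul_comm, hsq, hsq, one_mul, one_pow]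
  · rw [hodd a b hab, hsq, one_pow]

namespace CoxeterSystem

variable {B W : Type*} [Group W] {M : CoxeterMatrix B} (cs : CoxeterSystem M W)

theorem isConj_simple_of_odd {i j : B} (h : Odd (M i j)) : IsConj (cs.simple i) (cs.simple j) := by
  obtain ⟨k, hk⟩ := h
  exact isConj_of_mul_self_of_mul_pow_odd (cs.simple_mul_simple_self i)
    (cs.simple_mul_simple_self j) (hk ▸ cs.simple_mul_simple_pow i j)

theorem mem_of_isConj_simple (T : Set B) (hT : ∀ a b, a ∈ T → Odd (M a b) → b ∈ T) {i j : B}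
    (hi : i ∈ T) (h : IsConj (cs.simple i) (cs.simple j)) : j ∈ T := by
  classical
  let g : B → ℤˣ := fun b => if b ∈ T then -1 else 1
  have hg : M.IsLiftable g := by
    refine CoxeterMatrix.isLiftable_of_odd_imp_eq (fun _ => Int.units_mul_self _) fun a b hab => ?_
    have hmem : a ∈ T ↔ b ∈ T := ⟨(hT a b · hab), (hT b a · (M.symmetric b a ▸ hab))⟩
    simp only [g, hmem]
  have hgij : g i = g j := by
    simpa only [lift_apply_simple] using isConj_iff_eq.1 ((cs.lift ⟨g, hg⟩).map_isConj h)
  by_contra hj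
  simp only [g, hi, hj, if_true, if_false] at hgij
  exact absurd hgij (by decide)

theorem isConj_simple_iff_reflTransGen_odd {i j : B} :
    IsConj (cs.simple i) (cs.simple j) ↔ ReflTransGen (fun a b => Odd (M a b)) i j := by
  refine ⟨cs.mem_of_isConj_simple {b | ReflTransGen _ i b} (fun _ _ ha hab => ha.tail hab) .refl,
    fun h => ?_⟩
  induction h with
  | refl => exact .refl _
  | tail _ hbc ih => exact ih.trans (cs.isConj_simple_of_odd hbc)

end CoxeterSystem

theorem isConj_simple_iff_odd_chain_general {B W : Type*} [Group W]
    {M : CoxeterMatrix B} (cs : CoxeterSystem M W) (i j : B) :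
    IsConj (cs.simple i) (cs.simple j) ↔
      ∃ (n : ℕ) (f : Fin (n + 1) → B), f 0 = i ∧ f (Fin.last n) = j ∧
        ∀ k : Fin n, Odd (M (f k.castSucc) (f k.succ)) :=
  cs.isConj_simple_iff_reflTransGen_odd.trans reflTransGen_iff_exists_fin_chain

/-- Two simple reflections `s`, `t` of a Coxeter system `(W, S)` are conjugate in `W` if and
only if there is a sequence `s₁, …, sₙ` of elements of `S` with `s₁ = s`, `sₙ = t`, and
`m (sᵢ, sᵢ₊₁)` odd for all `i ∈ {1, …, n - 1}`. -/
theorem isConj_simple_iff_odd_chain {B W : Type*} [Group W] [Finite B]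
    {M : CoxeterMatrix B} (cs : CoxeterSystem M W) (i j : B) :
    IsConj (cs.simple i) (cs.simple j) ↔
      ∃ (n : ℕ) (f : Fin (n + 1) → B), f 0 = i ∧ f (Fin.last n) = j ∧
        ∀ k : Fin n, Odd (M (f k.castSucc) (f k.succ)) :=
  isConj_simple_iff_odd_chain_general cs i j
end

section
/- Let (W,S) and (W,S') be Coxeter systems on the same group W. If the set R_S of all reflections of (W,S) equals the set R_{S'} of all reflections of (W,S'), then |S| = |S'|. -/
/-!
The standard geometric representation of `(W, S)` on `ℝ^S` sends a reflection `w s w⁻¹` to a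
linear reflection, which moves every vector by a multiple of the root `w(α_s)`. If `(W, S')` has
the same reflections, then `W` is generated by `|S'|` reflections of `(W, S)`, so every element of
`W` moves every vector into the span of `|S'|` roots. Since `s(α_s) = -α_s`, this span contains
every simple root, hence is all of `ℝ^S`, and `|S| ≤ |S'|`. By symmetry `|S| = |S'|`.
-/

open Real Module Polynomial.Chebyshev

namespace Module

section CommRing

variable {R V : Type*} [CommRing R] [AddCommGroup V] [Module R V] {x y : V} {f g : Dual R V}

lemma reflection_mul_self (hf : f x = 2) : reflection hf * reflection hf = 1 :=
  mul_eq_one_iff_eq_inv.mpr (reflection_inv hf).symm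

lemma reflection_mul_reflection_sq_eq_one (hf : f x = 2) (hg : g y = 2)
    (hfy : f y = 0) (hgx : g x = 0) : (reflection hf * reflection hg) ^ 2 = 1 := by
  ext z
  simp [pow_two, reflection_apply, hf, hg, hfy, hgx]
  module

end CommRing

lemma reflection_mul_reflection_pow_eq_one {V : Type*} [AddCommGroup V] [Module ℝ V] {x y : V}
    {f g : Dual ℝ V} (hf : f x = 2) (hg : g y = 2) {m : ℕ} (hm : 3 ≤ m)
    (hfg : f y * g x = 4 * cos (π / m) ^ 2) : (reflection hf * reflection hg) ^ m = 1 := by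
  -- With `φ = 2π / m`, the Chebyshev coefficients in `reflection_mul_reflection_pow` vanish
  -- because `S_n(2 cos φ) sin φ = sin ((n + 1) φ)` and `m φ = 2π`.
  set φ := 2 * π / m
  have ht : 2 * cos φ = f y * g x - 2 := by
    rw [hfg, show φ = 2 * (π / m) by ring, cos_two_mul]; ring
  have hmφ : m * φ = 2 * π := by simp only [φ]; field_simp
  have hsin : sin φ ≠ 0 := by
    apply (sin_pos_of_pos_of_lt_pi (by positivity) _).ne'
    rw [div_lt_iff₀ (by positivity)]
    nlinarith [pi_pos, (show (3 : ℝ) ≤ m by exact_mod_cast hm)]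
  set σ : ℤ → ℝ := fun n => (S ℝ n).eval (2 * cos φ)
  have hσ (n : ℤ) : σ n * sin φ = sin ((n + 1) * φ) := S_two_mul_real_cos φ n
  have hcoeffs : σ ((m - 2) / 2) * (σ ((m - 1) / 2) + σ ((m - 3) / 2)) = 0 ∧
      σ ((m - 1) / 2) * (σ (m / 2) + σ ((m - 2) / 2)) = 0 := by
    obtain ⟨k, rfl | rfl⟩ := Nat.even_or_odd' m
    · have hk : σ (k - 1) = 0 := by
        refine (mul_eq_zero.mp ?_).resolve_right hsin
        rw [hσ]; push_cast at hmφ ⊢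
        rw [show ((k : ℝ) - 1 + 1) * φ = π by linarith, sin_pi]
      push_cast
      rw [show (2 * (k : ℤ) - 2) / 2 = k - 1 by omega,
        show (2 * (k : ℤ) - 1) / 2 = k - 1 by omega]
      simp [hk]
    · have hk : σ k + σ (k - 1) = 0 := by
        refine (mul_eq_zero.mp ?_).resolve_right hsin
        rw [add_mul, hσ, hσ]; push_cast at hmφ ⊢
        rw [show ((k : ℝ) + 1) * φ = 2 * π - (k - 1 + 1) * φ by linarith, sin_two_pi_sub]
        ring
      push_cast
      rw [show (2 * (k : ℤ) + 1 - 2) / 2 = k - 1 by omega,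
        show (2 * (k : ℤ) + 1 - 1) / 2 = k by omega,
        show (2 * (k : ℤ) + 1 - 3) / 2 = k - 1 by omega,
        show (2 * (k : ℤ) + 1) / 2 = k by omega]
      simp [hk]
  apply LinearEquiv.toLinearMap_injective
  rw [reflection_mul_reflection_pow hf hg m _ ht]
  simp only [σ] at hcoeffs
  simp [hcoeffs.1, hcoeffs.2]

end Module

namespace CoxeterMatrix

variable {B : Type*} (M : CoxeterMatrix B)

/-- Off-diagonal entries `M i j = 0` stand for `∞`; then `π / 0 = 0` and the entry is
`-cos 0 = -1`, as in the standard geometric representation. -/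
noncomputable def cosMatrix : Matrix B B ℝ := Matrix.of fun i j => -cos (π / M i j)

variable [Fintype B] [DecidableEq B]

noncomputable def simpleCoroot (i : B) : Dual ℝ (B → ℝ) :=
  (2 : ℝ) • Matrix.toBilin' M.cosMatrix (Pi.single i 1)

lemma simpleCoroot_single (i j : B) :
    M.simpleCoroot i (Pi.single j 1) = -2 * cos (π / M i j) := by
  simp [simpleCoroot, cosMatrix]

lemma simpleCoroot_single_self (i : B) : M.simpleCoroot i (Pi.single i 1) = 2 := by
  simp [simpleCoroot_single]

noncomputable def simpleReflection (i : B) : (B → ℝ) ≃ₗ[ℝ] (B → ℝ) :=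
  reflection (M.simpleCoroot_single_self i)

lemma simpleReflection_apply (i : B) (v : B → ℝ) :
    M.simpleReflection i v = v - M.simpleCoroot i v • Pi.single i 1 :=
  reflection_apply _ _

lemma simpleReflection_single_self (i : B) :
    M.simpleReflection i (Pi.single i 1) = -Pi.single i 1 :=
  reflection_apply_self _

lemma isLiftable_simpleReflection : M.IsLiftable M.simpleReflection := by
  intro i j
  obtain rfl | hij := eq_or_ne i j
  · rw [M.diagonal, pow_one]
    exact reflection_mul_self _
  have hji : M.simpleCoroot j (Pi.single i 1) = M.simpleCoroot i (Pi.single j 1) := by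
    rw [simpleCoroot_single, simpleCoroot_single, M.symmetric]
  obtain h0 | h2 | h3 : M i j = 0 ∨ M i j = 2 ∨ 3 ≤ M i j := by
    have := M.off_diagonal i j hij; omega
  · rw [h0, pow_zero]
  · have hij0 : M.simpleCoroot i (Pi.single j 1) = 0 := by
      simp [simpleCoroot_single, h2]
    rw [h2]
    exact reflection_mul_reflection_sq_eq_one _ _ hij0 (hji.trans hij0)
  · refine reflection_mul_reflection_pow_eq_one _ _ h3 ?_
    rw [hji, simpleCoroot_single]
    ring

end CoxeterMatrix

lemma MonoidHom.apply_sub_self_mem_of_mem_closure {G R V : Type*} [Group G] [Ring R]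
    [AddCommGroup V] [Module R V] (ρ : G →* (V ≃ₗ[R] V)) (U : Submodule R V) {T : Set G}
    (hT : ∀ t ∈ T, ∀ v, ρ t v - v ∈ U) {g : G} (hg : g ∈ Subgroup.closure T) (v : V) :
    ρ g v - v ∈ U := by
  induction hg using Subgroup.closure_induction generalizing v with
  | mem t ht => exact hT t ht v
  | one => simp
  | mul g h _ _ hg hh =>
    rw [map_mul, LinearEquiv.mul_apply, ← sub_add_sub_cancel _ (ρ h v)]
    exact U.add_mem (hg _) (hh v)
  | inv g _ hg =>
    simpa using U.neg_mem (hg (ρ g⁻¹ v))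

namespace CoxeterSystem

variable {B W : Type*} [Group W] [Fintype B] [DecidableEq B] {M : CoxeterMatrix B}
  (cs : CoxeterSystem M W)

noncomputable def geometricRepresentation : W →* ((B → ℝ) ≃ₗ[ℝ] (B → ℝ)) :=
  cs.lift ⟨M.simpleReflection, M.isLiftable_simpleReflection⟩

lemma geometricRepresentation_simple (i : B) :
    cs.geometricRepresentation (cs.simple i) = M.simpleReflection i :=
  cs.lift_apply_simple _ i

lemma geometricRepresentation_conj_simple_apply_sub_self_mem (w : W) (i : B) (v : B → ℝ) :
    cs.geometricRepresentation (w * cs.simple i * w⁻¹) v - v ∈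
      ℝ ∙ cs.geometricRepresentation w (Pi.single i 1) := by
  set ρ := cs.geometricRepresentation
  have hww : ρ w (ρ w⁻¹ v) = v := by simp
  rw [Submodule.mem_span_singleton]
  refine ⟨-M.simpleCoroot i (ρ w⁻¹ v), ?_⟩
  simp only [map_mul, LinearEquiv.mul_apply, geometricRepresentation_simple,
    M.simpleReflection_apply, map_sub, map_smul, hww, ρ]
  module

theorem card_le_card_of_closure_eq_top {ι : Type*} [Fintype ι] {t : ι → W}
    (ht : ∀ k, cs.IsReflection (t k)) (hgen : Subgroup.closure (Set.range t) = ⊤) :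
    Fintype.card B ≤ Fintype.card ι := by
  choose w i hwi using ht
  set ρ := cs.geometricRepresentation
  set U := Submodule.span ℝ (Set.range fun k => ρ (w k) (Pi.single (i k) 1))
  have hmoved (g : W) (v : B → ℝ) : ρ g v - v ∈ U := by
    refine ρ.apply_sub_self_mem_of_mem_closure U ?_ (hgen ▸ Subgroup.mem_top g) v
    rintro _ ⟨k, rfl⟩ v
    rw [hwi k]
    exact (Submodule.span_singleton_le_iff_mem _ U).mpr (Submodule.subset_span ⟨k, rfl⟩)
      (cs.geometricRepresentation_conj_simple_apply_sub_self_mem _ _ v)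
  have hsingle (b : B) : Pi.single b 1 ∈ U := by
    have := hmoved (cs.simple b) (Pi.single b 1)
    rwa [geometricRepresentation_simple, M.simpleReflection_single_self,
      show -Pi.single b 1 - Pi.single b 1 = (-2 : ℝ) • Pi.single b (1 : ℝ) by module,
      U.smul_mem_iff (by norm_num)] at this
  have hU : U = ⊤ := by
    rw [eq_top_iff, ← (Pi.basisFun ℝ B).span_eq, Submodule.span_le]
    rintro _ ⟨b, rfl⟩
    simpa using hsingle b
  calc Fintype.card B = finrank ℝ U := by
        rw [hU, finrank_top, Module.finrank_fintype_fun_eq_card]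
    _ ≤ Fintype.card ι := finrank_range_le_card _

end CoxeterSystem

/-- If `(W, S)` and `(W, S')` are Coxeter systems on the same group `W` whose sets of
reflections coincide, then `|S| = |S'|`. -/
theorem card_eq_of_reflections_eq {B B' W : Type*} [Group W] [Finite B] [Finite B']
    {M : CoxeterMatrix B} {M' : CoxeterMatrix B'}
    (cs : CoxeterSystem M W) (cs' : CoxeterSystem M' W)
    (h : ∀ w : W, cs.IsReflection w ↔ cs'.IsReflection w) :
    Nat.card B = Nat.card B' := by
  have := Fintype.ofFinite B
  have := Fintype.ofFinite B'
  classical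
  rw [Nat.card_eq_fintype_card, Nat.card_eq_fintype_card]
  exact le_antisymm
    (cs.card_le_card_of_closure_eq_top (fun k ↦ (h _).mpr (cs'.isReflection_simple k))
      cs'.subgroup_closure_range_simple)
    (cs'.card_le_card_of_closure_eq_top (fun k ↦ (h _).mp (cs.isReflection_simple k))
      cs.subgroup_closure_range_simple)
end

section
/- Let M be the 4×4 Coxeter matrix on generators a,b,c,d with m(a,b) = 2, m(b,c) = 3, m(c,d) = 2, and m(a,c) = m(a,d) = m(b,d) = ∞ (the path diagram with edge labels 2, 3, 2), and let N be the 4×4 Coxeter matrix on generators a',b',c',d' with m(b',a') = 2, m(b',c') = 2, m(b',d') = 3, and m(a',c') = m(a',d') = m(c',d') = ∞ (the star diagram with center b' and edge labels 2, 2, 3). Then the Coxeter group defined by M is isomorphic to the Coxeter group defined by N. -/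
/-!
In Mathlib's `CoxeterMatrix`, the entry `M i j : ℕ` is the order of `s i * s j`,
with `0` encoding the order `∞`.
-/

/-- The Coxeter matrix of the path diagram `a — b — c — d` with edge labels `2`, `3`, `2`
(all non-edges have label `∞`, encoded by `0`). -/
def pathMatrix : CoxeterMatrix (Fin 4) where
  M := !![1, 2, 0, 0;
          2, 1, 3, 0;
          0, 3, 1, 2;
          0, 0, 2, 1]
  off_diagonal := by intro i i'; fin_cases i <;> fin_cases i' <;> simp

/-- The Coxeter matrix of the star diagram with center `b'` and edges `b'—a'`, `b'—c'`, `b'—d'`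
labeled `2`, `2`, `3` (all non-edges have label `∞`, encoded by `0`); the generators are
ordered `a', b', c', d'`. -/
def starMatrix : CoxeterMatrix (Fin 4) where
  M := !![1, 2, 0, 0;
          2, 1, 2, 3;
          0, 2, 1, 0;
          0, 3, 0, 1]
  off_diagonal := by intro i i'; fin_cases i <;> fin_cases i' <;> simp

/-!
In the path group with generators `a, b, c, d`, the element `w = bcb` is the longest element
of the dihedral group `⟨b, c⟩` of order `6`, so conjugation by `w` swaps `b` and `c`. Hence the
reflection `wdw` commutes with `b`, and `a, b, wdw, c` satisfy the relations of the star diagram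
with centre `b` (a label `∞` imposes no relation). Symmetrically, in the star group
`u = b'd'b'` swaps `b'` and `d'`, and `a', b', d', uc'u` satisfy the relations of the path
diagram. The two induced homomorphisms send `w` and `u` to each other, so they are mutually
inverse on generators because conjugating twice by an involution is the identity.
-/

section Involutions

variable {G : Type*} [Group G]

theorem mul_pow_eq_one_comm (x y : G) (n : ℕ) : (x * y) ^ n = 1 ↔ (y * x) ^ n = 1 := by
  rw [show y * x = x⁻¹ * (x * y) * x⁻¹⁻¹ by group, conj_pow, conj_eq_one_iff]

theorem mul_self_cancel_left {x : G} (hx : x * x = 1) (z : G) : x * (x * z) = z := by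
  rw [← mul_assoc, hx, one_mul]

theorem conj_conj_of_mul_self_eq_one {w : G} (hw : w * w = 1) (s : G) :
    w * (w * s * w) * w = s := by
  simp only [mul_assoc, mul_self_cancel_left hw, hw, mul_one]

theorem conj_mul_self_eq_one {w s : G} (hw : w * w = 1) (hs : s * s = 1) :
    w * s * w * (w * s * w) = 1 := by
  simp only [mul_assoc, mul_self_cancel_left hw, mul_self_cancel_left hs, hw]

theorem conj_mul_conj_pow {w : G} (hw : w * w = 1) (a s : G) (n : ℕ) :
    (w * a * w * (w * s * w)) ^ n = w * (a * s) ^ n * w := by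
  have hw' : w⁻¹ = w := inv_eq_of_mul_eq_one_right hw
  calc (w * a * w * (w * s * w)) ^ n = (w * (a * s) * w⁻¹) ^ n := by
        simp only [hw', mul_assoc, mul_self_cancel_left hw]
    _ = w * (a * s) ^ n * w := by rw [conj_pow, hw']

theorem braid_conj_left {x y : G} (hx : x * x = 1) (hy : y * y = 1) (h : (x * y) ^ 3 = 1) :
    x * y * x * x * (x * y * x) = y := by
  calc x * y * x * x * (x * y * x) = (x * y) ^ 3 * y := by
        simp only [pow_succ, pow_zero, one_mul, mul_assoc, mul_self_cancel_left hx, hy,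
          mul_one]
    _ = y := by rw [h, one_mul]

theorem braid_conj_right {x y : G} (hx : x * x = 1) (hy : y * y = 1) (h : (x * y) ^ 3 = 1) :
    x * y * x * y * (x * y * x) = x := by
  have h' := conj_conj_of_mul_self_eq_one (conj_mul_self_eq_one hx hy) x
  rwa [braid_conj_left hx hy h] at h'

end Involutions

section Relabelling

variable {G H F : Type*}

def starOfPath [Mul G] (f : Fin 4 → G) : Fin 4 → G :=
  ![f 0, f 1, f 1 * f 2 * f 1 * f 3 * (f 1 * f 2 * f 1), f 2]

def pathOfStar [Mul G] (f : Fin 4 → G) : Fin 4 → G :=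
  ![f 0, f 1, f 3, f 1 * f 3 * f 1 * f 2 * (f 1 * f 3 * f 1)]

theorem comp_pathOfStar [Mul G] [Mul H] [FunLike F G H] [MulHomClass F G H] (ψ : F)
    (f : Fin 4 → G) : ⇑ψ ∘ pathOfStar f = pathOfStar (⇑ψ ∘ f) := by
  funext i; fin_cases i <;> simp [pathOfStar]

theorem comp_starOfPath [Mul G] [Mul H] [FunLike F G H] [MulHomClass F G H] (ψ : F)
    (f : Fin 4 → G) : ⇑ψ ∘ starOfPath f = starOfPath (⇑ψ ∘ f) := by
  funext i; fin_cases i <;> simp [starOfPath]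

variable [Group G]

theorem pathOfStar_starOfPath {f : Fin 4 → G} (h1 : f 1 * f 1 = 1) (h2 : f 2 * f 2 = 1) :
    pathOfStar (starOfPath f) = f := by
  funext i
  fin_cases i <;>
    simp [pathOfStar, starOfPath, conj_conj_of_mul_self_eq_one (conj_mul_self_eq_one h1 h2)]

theorem starOfPath_pathOfStar {f : Fin 4 → G} (h1 : f 1 * f 1 = 1) (h3 : f 3 * f 3 = 1) :
    starOfPath (pathOfStar f) = f := by
  funext i
  fin_cases i <;>
    simp [pathOfStar, starOfPath, conj_conj_of_mul_self_eq_one (conj_mul_self_eq_one h1 h3)]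

theorem pathMatrix_isLiftable_iff {f : Fin 4 → G} :
    pathMatrix.IsLiftable f ↔ (∀ i, f i * f i = 1) ∧
      (f 0 * f 1) ^ 2 = 1 ∧ (f 1 * f 2) ^ 3 = 1 ∧ (f 2 * f 3) ^ 2 = 1 := by
  refine ⟨fun hf => ⟨fun i => by simpa using hf i i, hf 0 1, hf 1 2, hf 2 3⟩, ?_⟩
  rintro ⟨hsq, h01, h12, h23⟩ i j
  have h10 := (mul_pow_eq_one_comm _ _ _).mp h01
  have h21 := (mul_pow_eq_one_comm _ _ _).mp h12
  have h32 := (mul_pow_eq_one_comm _ _ _).mp h23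
  fin_cases i <;> fin_cases j <;> simp [pathMatrix, hsq, h01, h12, h23, h10, h21, h32]

theorem starMatrix_isLiftable_iff {f : Fin 4 → G} :
    starMatrix.IsLiftable f ↔ (∀ i, f i * f i = 1) ∧
      (f 0 * f 1) ^ 2 = 1 ∧ (f 1 * f 2) ^ 2 = 1 ∧ (f 1 * f 3) ^ 3 = 1 := by
  refine ⟨fun hf => ⟨fun i => by simpa using hf i i, hf 0 1, hf 1 2, hf 1 3⟩, ?_⟩
  rintro ⟨hsq, h01, h12, h13⟩ i j
  have h10 := (mul_pow_eq_one_comm _ _ _).mp h01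
  have h21 := (mul_pow_eq_one_comm _ _ _).mp h12
  have h31 := (mul_pow_eq_one_comm _ _ _).mp h13
  fin_cases i <;> fin_cases j <;> simp [starMatrix, hsq, h01, h12, h13, h10, h21, h31]

theorem isLiftable_starOfPath {f : Fin 4 → G} (hf : pathMatrix.IsLiftable f) :
    starMatrix.IsLiftable (starOfPath f) := by
  obtain ⟨hsq, h01, h12, h23⟩ := pathMatrix_isLiftable_iff.mp hf
  set w := f 1 * f 2 * f 1
  have hw : w * w = 1 := conj_mul_self_eq_one (hsq 1) (hsq 2)
  have hb : w * f 2 * w = f 1 := braid_conj_right (hsq 1) (hsq 2) h12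
  refine starMatrix_isLiftable_iff.mpr ⟨fun i => ?_, h01, ?_, h12⟩
  · fin_cases i <;> simp [starOfPath, w, hsq, conj_mul_self_eq_one hw (hsq 3)]
  · calc (f 1 * (w * f 3 * w)) ^ 2 = (w * f 2 * w * (w * f 3 * w)) ^ 2 := by rw [hb]
      _ = w * (f 2 * f 3) ^ 2 * w := conj_mul_conj_pow hw _ _ _
      _ = 1 := by rw [h23, mul_one, hw]

theorem isLiftable_pathOfStar {f : Fin 4 → G} (hf : starMatrix.IsLiftable f) :
    pathMatrix.IsLiftable (pathOfStar f) := by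
  obtain ⟨hsq, h01, h12, h13⟩ := starMatrix_isLiftable_iff.mp hf
  set u := f 1 * f 3 * f 1
  have hu : u * u = 1 := conj_mul_self_eq_one (hsq 1) (hsq 3)
  have hb : u * f 1 * u = f 3 := braid_conj_left (hsq 1) (hsq 3) h13
  refine pathMatrix_isLiftable_iff.mpr ⟨fun i => ?_, h01, h13, ?_⟩
  · fin_cases i <;> simp [pathOfStar, u, hsq, conj_mul_self_eq_one hu (hsq 2)]
  · calc (f 3 * (u * f 2 * u)) ^ 2 = (u * f 1 * u * (u * f 2 * u)) ^ 2 := by rw [hb]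
      _ = u * (f 1 * f 2) ^ 2 * u := conj_mul_conj_pow hu _ _ _
      _ = 1 := by rw [h12, mul_one, hu]

end Relabelling

namespace CoxeterSystem

variable {B₁ B₂ W₁ W₂ : Type*} [Group W₁] [Group W₂] {M₁ : CoxeterMatrix B₁}
  {M₂ : CoxeterMatrix B₂}

theorem lift_comp_simple (cs : CoxeterSystem M₁ W₁) {f : B₁ → W₂}
    (hf : M₁.IsLiftable f) : ⇑(cs.lift ⟨f, hf⟩) ∘ cs.simple = f :=
  funext (cs.lift_apply_simple hf)

def mulEquivOfLift (cs₁ : CoxeterSystem M₁ W₁) (cs₂ : CoxeterSystem M₂ W₂)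
    {f : B₁ → W₂} {g : B₂ → W₁} (hf : M₁.IsLiftable f) (hg : M₂.IsLiftable g)
    (hgf : ⇑(cs₂.lift ⟨g, hg⟩) ∘ f = cs₁.simple) (hfg : ⇑(cs₁.lift ⟨f, hf⟩) ∘ g = cs₂.simple) :
    W₁ ≃* W₂ :=
  MonoidHom.toMulEquiv (cs₁.lift ⟨f, hf⟩) (cs₂.lift ⟨g, hg⟩)
    (cs₁.ext_simple fun i => by simpa using congrFun hgf i)
    (cs₂.ext_simple fun j => by simpa using congrFun hfg j)

end CoxeterSystem

/-- The Coxeter group of the path diagram with edge labels `2`, `3`, `2` is isomorphic to the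
Coxeter group of the star diagram with edge labels `2`, `2`, `3`. -/
theorem pathMatrix_group_iso_starMatrix_group :
    Nonempty (pathMatrix.Group ≃* starMatrix.Group) := by
  set P := pathMatrix.toCoxeterSystem
  set S := starMatrix.toCoxeterSystem
  have hP : pathMatrix.IsLiftable P.simple := P.simple_mul_simple_pow
  have hS : starMatrix.IsLiftable S.simple := S.simple_mul_simple_pow
  refine ⟨P.mulEquivOfLift S (isLiftable_pathOfStar hS) (isLiftable_starOfPath hP) ?_ ?_⟩
  · rw [comp_pathOfStar, S.lift_comp_simple,
      pathOfStar_starOfPath (P.simple_mul_simple_self 1) (P.simple_mul_simple_self 2)]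
  · rw [comp_starOfPath, P.lift_comp_simple,
      starOfPath_pathOfStar (S.simple_mul_simple_self 1) (S.simple_mul_simple_self 3)]
end
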